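/- Let P be a Λ×I matrix with entries in G⁰ and let i,i',j,j' ∈ I and λ,λ',μ,μ' ∈ Λ with p_{μj'} = 0 and p_{μ'j} = 0. In the simplified graph G(I,Λ,P): (1) If there is a path from (i,λ') to (j,μ') and a path from (i',λ) to (j',μ), then, letting n = d((i,λ'),(j,μ')) and m = d((i',λ),(j',μ)), the distance d((i,λ),(j,μ)) is at most max{n,m} if max{n,m} is even, and at most 1 + max{n,m} if max{n,m} is odd. (2) If there is a path from (i,λ') to (j',μ) and a path from (i',λ) to (j,μ'), then, letting n = d((i,λ'),(j',μ)) and m = d((i',λ),(j,μ')), the distance d((i,λ),(j,μ)) is at most 1 + max{n,m} if max{n,m} is even, and at most max{n,m} if max{n,m} is odd. -/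

import Mathlib

variable {G : Type*} [Group G] {I Λ : Type*}

/-- The simplified graph `G(I,Λ,P)` on `I×Λ`: distinct vertices `(i,λ)` and `(j,μ)` are
adjacent iff `p_{λj} = 0` and `p_{μi} = 0`. Entries of `P` lie in `G⁰`, encoded as
`Option G` with `none` as the zero. -/
def simpGraph {G : Type*} [Group G] {I Λ : Type*} (P : Λ → I → Option G) :
    SimpleGraph (I × Λ) where
  Adj a b := a ≠ b ∧ P a.2 b.1 = none ∧ P b.2 a.1 = none
  symm := ⟨fun _ _ h => ⟨h.1.symm, h.2.2, h.2.1⟩⟩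
  loopless := ⟨fun _ h => h.1 rfl⟩

/-!
A walk `(i₀,λ₀), …, (iₙ,λₙ)` in `G(I,Λ,P)` yields two walks `i₀, λ₁, i₂, …` and
`λ₀, i₁, λ₂, …` of length `n` in the bipartite incidence graph of `P`; conversely, two such
walks of a common length `N` interleave to a walk of length at most `N` (consecutive pairs may
coincide). Take the first walk from the path out of `(i,λ')` and the second from the path out
of `(i',λ)`. The edges `j — μ'` and `j' — μ` given by `p_{μ'j} = p_{μj'} = 0` sit at their
ends, so both walks can oscillate until they have a common length `N` of the parity that makes
them end at `j` and at `μ`: even in case (1), odd in case (2).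
-/

def alternate {α : Type*} (u v : α) (n : ℕ) : α := if Even n then u else v

lemma alternate_succ {α : Type*} (u v : α) (n : ℕ) :
    alternate u v (n + 1) = alternate v u n := by
  by_cases h : Even n <;> simp [alternate, Nat.even_add_one, h]

namespace SimpleGraph

lemma Adj.alternate {V : Type*} {H : SimpleGraph V} {u v : V} (h : H.Adj u v) (n : ℕ) :
    H.Adj (alternate u v n) (alternate u v (n + 1)) := by
  rw [alternate_succ]
  by_cases hn : Even n <;> simp [_root_.alternate, hn, h, h.symm]

lemma exists_walk_alternate_of_le {V : Type*} {H : SimpleGraph V} {u v x : V} (h : H.Adj u v)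
    {n N : ℕ} (hnN : n ≤ N) (hq : ∃ q : H.Walk x (alternate u v n), q.length = n) :
    ∃ q : H.Walk x (alternate u v N), q.length = N := by
  induction N, hnN using Nat.le_induction with
  | base => exact hq
  | succ N _ ih =>
    obtain ⟨q, hq⟩ := ih
    exact ⟨q.concat (h.alternate N), by simp [hq]⟩

end SimpleGraph

open SimpleGraph

def incidenceGraph {α : Type*} (P : Λ → I → Option α) : SimpleGraph (I ⊕ Λ) where
  Adj a b := match a, b with
    | .inl i, .inr l => P l i = none
    | .inr l, .inl i => P l i = none
    | _, _ => False
  symm := ⟨by rintro (i|l) (j|k) h <;> exact h⟩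
  loopless := ⟨by rintro (i|l) h <;> exact h⟩

def IsCoordPair (z : I × Λ) (a b : I ⊕ Λ) : Prop :=
  (a = .inl z.1 ∧ b = .inr z.2) ∨ (a = .inr z.2 ∧ b = .inl z.1)

lemma IsCoordPair.eq {z z' : I × Λ} {a b : I ⊕ Λ} (h : IsCoordPair z a b)
    (h' : IsCoordPair z' a b) : z = z' := by
  rcases h with ⟨rfl, rfl⟩ | ⟨rfl, rfl⟩ <;> rcases h' with ⟨h₁, h₂⟩ | ⟨h₁, h₂⟩ <;>
    simp_all [Prod.ext_iff]

namespace simpGraph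

variable (P : Λ → I → Option G)

lemma exists_incidenceGraph_walks {x y : I × Λ} (p : (simpGraph P).Walk x y) :
    (∃ q : (incidenceGraph P).Walk (.inl x.1) (alternate (.inl y.1) (.inr y.2) p.length),
      q.length = p.length) ∧
    (∃ q : (incidenceGraph P).Walk (.inr x.2) (alternate (.inr y.2) (.inl y.1) p.length),
      q.length = p.length) := by
  induction p with
  | nil => exact ⟨⟨.nil, rfl⟩, ⟨.nil, rfl⟩⟩
  | @cons u v w h p ih =>
    obtain ⟨⟨qI, hqI⟩, ⟨qΛ, hqΛ⟩⟩ := ih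
    have hI : (incidenceGraph P).Adj (.inl u.1) (.inr v.2) := h.2.2
    have hΛ : (incidenceGraph P).Adj (.inr u.2) (.inl v.1) := h.2.1
    exact ⟨⟨(qΛ.cons hI).copy rfl (alternate_succ _ _ _).symm, by simp [hqΛ]⟩,
      ⟨(qI.cons hΛ).copy rfl (alternate_succ _ _ _).symm, by simp [hqI]⟩⟩

lemma exists_isCoordPair_of_adj {z : I × Λ} {a a' b b' : I ⊕ Λ} (hz : IsCoordPair z a b)
    (ha : (incidenceGraph P).Adj a a') (hb : (incidenceGraph P).Adj b b') :
    ∃ z', IsCoordPair z' a' b' ∧ (z = z' ∨ (simpGraph P).Adj z z') := by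
  rcases hz with ⟨rfl, rfl⟩ | ⟨rfl, rfl⟩
  · obtain ⟨l⟩ | ⟨l⟩ := a' <;> obtain ⟨i⟩ | ⟨i⟩ := b' <;> try exact ha.elim
    all_goals try exact hb.elim
    exact ⟨(i, l), .inr ⟨rfl, rfl⟩, or_iff_not_imp_left.2 fun hne => ⟨hne, hb, ha⟩⟩
  · obtain ⟨i⟩ | ⟨i⟩ := a' <;> obtain ⟨l⟩ | ⟨l⟩ := b' <;> try exact ha.elim
    all_goals try exact hb.elim
    exact ⟨(i, l), .inl ⟨rfl, rfl⟩, or_iff_not_imp_left.2 fun hne => ⟨hne, ha, hb⟩⟩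

lemma exists_walk_of_isCoordPair {a a' b b' : I ⊕ Λ} (qa : (incidenceGraph P).Walk a a')
    (qb : (incidenceGraph P).Walk b b') (hlen : qb.length = qa.length) {x y : I × Λ}
    (hx : IsCoordPair x a b) (hy : IsCoordPair y a' b') :
    ∃ w : (simpGraph P).Walk x y, w.length ≤ qa.length := by
  induction qa generalizing b x with
  | nil =>
    cases qb with
    | nil => exact ⟨Walk.nil.copy rfl (hx.eq hy), by simp⟩
    | cons => simp at hlen
  | cons ha qa ih =>
    cases qb with
    | nil => simp at hlen
    | cons hb qb =>
      obtain ⟨z, hz, hxz⟩ := exists_isCoordPair_of_adj P hx ha hb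
      obtain ⟨w, hw⟩ := ih qb (by simpa using hlen) hz hy
      rcases hxz with rfl | hxz
      · exact ⟨w, by simp; omega⟩
      · exact ⟨w.cons hxz, by simp [hw]⟩

lemma reachable_and_dist_le {i i' : I} {l l' : Λ} {y₁ y₂ z : I × Λ}
    (hy₁ : P y₁.2 y₁.1 = none) (hy₂ : P y₂.2 y₂.1 = none)
    (h₁ : (simpGraph P).Reachable (i, l') y₁) (h₂ : (simpGraph P).Reachable (i', l) y₂)
    {N : ℕ} (hN₁ : (simpGraph P).dist (i, l') y₁ ≤ N) (hN₂ : (simpGraph P).dist (i', l) y₂ ≤ N)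
    (hz : z = if Even N then (y₁.1, y₂.2) else (y₂.1, y₁.2)) :
    (simpGraph P).Reachable (i, l) z ∧ (simpGraph P).dist (i, l) z ≤ N := by
  obtain ⟨p₁, hp₁⟩ := h₁.exists_walk_length_eq_dist
  obtain ⟨p₂, hp₂⟩ := h₂.exists_walk_length_eq_dist
  have e₁ : (incidenceGraph P).Adj (.inl y₁.1) (.inr y₁.2) := hy₁
  have e₂ : (incidenceGraph P).Adj (.inr y₂.2) (.inl y₂.1) := hy₂
  obtain ⟨qI, hqI⟩ := exists_walk_alternate_of_le e₁ (hp₁ ▸ hN₁)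
    (exists_incidenceGraph_walks P p₁).1
  obtain ⟨qΛ, hqΛ⟩ := exists_walk_alternate_of_le e₂ (hp₂ ▸ hN₂)
    (exists_incidenceGraph_walks P p₂).2
  have hends : IsCoordPair z (alternate (.inl y₁.1) (.inr y₁.2) N)
      (alternate (.inr y₂.2) (.inl y₂.1) N) := by
    by_cases hN : Even N <;> simp [hz, hN, alternate, IsCoordPair]
  obtain ⟨w, hw⟩ := exists_walk_of_isCoordPair P qI qΛ (hqΛ.trans hqI.symm)
    (x := (i, l)) (.inl ⟨rfl, rfl⟩) hends
  exact ⟨w.reachable, (dist_le w).trans (hw.trans hqI.le)⟩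

end simpGraph

/-- Distance bounds in `G(I,Λ,P)` given `p_{μj'} = 0` and `p_{μ'j} = 0`:
(1) if `(i,λ')` reaches `(j,μ')` and `(i',λ)` reaches `(j',μ)`, then `(i,λ)` reaches `(j,μ)`
and `d((i,λ),(j,μ)) ≤ max{n,m}` if `max{n,m}` is even, and `≤ 1 + max{n,m}` if odd, where
`n = d((i,λ'),(j,μ'))` and `m = d((i',λ),(j',μ))`;
(2) if `(i,λ')` reaches `(j',μ)` and `(i',λ)` reaches `(j,μ')`, the analogous bounds with
the parities interchanged. -/
theorem stmt_7 (P : Λ → I → Option G) (i i' j j' : I) (l l' m m' : Λ)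
    (h1 : P m j' = none) (h2 : P m' j = none) :
    ((simpGraph P).Reachable (i, l') (j, m') → (simpGraph P).Reachable (i', l) (j', m) →
      (simpGraph P).Reachable (i, l) (j, m) ∧
      (Even (max ((simpGraph P).dist (i, l') (j, m')) ((simpGraph P).dist (i', l) (j', m))) →
        (simpGraph P).dist (i, l) (j, m) ≤
          max ((simpGraph P).dist (i, l') (j, m')) ((simpGraph P).dist (i', l) (j', m))) ∧
      (¬ Even (max ((simpGraph P).dist (i, l') (j, m')) ((simpGraph P).dist (i', l) (j', m))) →
        (simpGraph P).dist (i, l) (j, m) ≤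
          1 + max ((simpGraph P).dist (i, l') (j, m')) ((simpGraph P).dist (i', l) (j', m)))) ∧
    ((simpGraph P).Reachable (i, l') (j', m) → (simpGraph P).Reachable (i', l) (j, m') →
      (simpGraph P).Reachable (i, l) (j, m) ∧
      (Even (max ((simpGraph P).dist (i, l') (j', m)) ((simpGraph P).dist (i', l) (j, m'))) →
        (simpGraph P).dist (i, l) (j, m) ≤
          1 + max ((simpGraph P).dist (i, l') (j', m)) ((simpGraph P).dist (i', l) (j, m'))) ∧
      (¬ Even (max ((simpGraph P).dist (i, l') (j', m)) ((simpGraph P).dist (i', l) (j, m'))) →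
        (simpGraph P).dist (i, l) (j, m) ≤
          max ((simpGraph P).dist (i, l') (j', m)) ((simpGraph P).dist (i', l) (j, m')))) := by
  refine ⟨fun hr₁ hr₂ => ?_, fun hr₁ hr₂ => ?_⟩
  · have key (N : ℕ) (hN : max _ _ ≤ N) (hz : (j, m) = if Even N then (j, m) else (j', m')) :=
      simpGraph.reachable_and_dist_le P h2 h1 hr₁ hr₂ (le_of_max_le_left hN)
        (le_of_max_le_right hN) hz
    rcases Nat.even_or_odd (max ((simpGraph P).dist (i, l') (j, m'))
      ((simpGraph P).dist (i', l) (j', m))) with hM | hM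
    · obtain ⟨hr, hd⟩ := key _ le_rfl (by simp [hM])
      exact ⟨hr, fun _ => hd, fun h => (h hM).elim⟩
    · obtain ⟨hr, hd⟩ := key _ (Nat.le_succ _) (by simp [hM.add_one])
      exact ⟨hr, fun h => (Nat.not_even_iff_odd.2 hM h).elim, fun _ => by omega⟩
  · have key (N : ℕ) (hN : max _ _ ≤ N) (hz : (j, m) = if Even N then (j', m') else (j, m)) :=
      simpGraph.reachable_and_dist_le P h1 h2 hr₁ hr₂ (le_of_max_le_left hN)
        (le_of_max_le_right hN) hz
    rcases Nat.even_or_odd (max ((simpGraph P).dist (i, l') (j', m))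
      ((simpGraph P).dist (i', l) (j, m'))) with hM | hM
    · obtain ⟨hr, hd⟩ := key _ (Nat.le_succ _) (by simp [Nat.even_add_one, hM])
      exact ⟨hr, fun _ => by omega, fun h => (h hM).elim⟩
    · obtain ⟨hr, hd⟩ := key _ le_rfl (by simp [Nat.not_even_iff_odd.2 hM])
      exact ⟨hr, fun h => (Nat.not_even_iff_odd.2 hM h).elim, fun _ => hd⟩
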